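/- arXiv:1002.4951 — 2 statements merged into one kernel-verified Lean document; each statement's English description precedes it below -/
import Mathlib

section
/- The commutation relation h(λ)B⁽ᵏ⁾_M(μ̄) = B⁽ᵏ⁾_M(μ̄)h(λ) + 2Σᵢ (B⁽ᵏ⁾_M({λ}∪μ̄⁽ⁱ⁾) - B⁽ᵏ⁾_M(μ̄))/(λ-μᵢ) + ξΣᵢ B⁽ᵏ⁺¹⁾_{M-1}(μ̄⁽ⁱ⁾)(μᵢ β̂_M(μᵢ; μ̄⁽ⁱ⁾) - 2k) holds, where β̂_M(λ; ν̄) = h(λ) + Σ_{ν∈ν̄} 2/(ν-λ). -/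
noncomputable section

/-- The current `h(λ) = Σ_a (h_a/(λ-z_a) + ξ z_a X⁺_a)`. -/
def hCur {A : Type*} [Ring A] [Algebra ℂ A] {N : ℕ} (z : Fin N → ℂ) (ξ : ℂ)
    (H Xp : Fin N → A) (l : ℂ) : A :=
  ∑ a, ((l - z a)⁻¹ • H a + (ξ * z a) • Xp a)

/-- The current `X⁻(λ) = Σ_a (X⁻_a/(λ-z_a) - (ξ/2)λ h_a)`. -/
def XmCur {A : Type*} [Ring A] [Algebra ℂ A] {N : ℕ} (z : Fin N → ℂ) (ξ : ℂ)
    (H Xm : Fin N → A) (l : ℂ) : A :=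
  ∑ a, ((l - z a)⁻¹ • Xm a - (ξ / 2 * l) • H a)

/-- The current `X⁺(λ) = Σ_a X⁺_a/(λ-z_a)`. -/
def XpCur {A : Type*} [Ring A] [Algebra ℂ A] {N : ℕ} (z : Fin N → ℂ)
    (Xp : Fin N → A) (l : ℂ) : A :=
  ∑ a, (l - z a)⁻¹ • Xp a

/-- The λ-derivative `h'(λ) = -Σ_a h_a/(λ-z_a)²` of the current `h(λ)`. -/
def hdCur {A : Type*} [Ring A] [Algebra ℂ A] {N : ℕ} (z : Fin N → ℂ)
    (H : Fin N → A) (l : ℂ) : A :=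
  ∑ a, (-((l - z a) ^ 2)⁻¹) • H a

/-- The generating function `t(λ) = h(λ)² - 2h'(λ) + 2(2X⁻(λ) + ξλ)X⁺(λ)`. -/
def tCur {A : Type*} [Ring A] [Algebra ℂ A] {N : ℕ} (z : Fin N → ℂ) (ξ : ℂ)
    (H Xp Xm : Fin N → A) (l : ℂ) : A :=
  hCur z ξ H Xp l * hCur z ξ H Xp l - (2 : ℂ) • hdCur z H l +
    ((2 : ℂ) • ((2 : ℂ) • XmCur z ξ H Xm l + (ξ * l) • (1 : A))) * XpCur z Xp l

/-- The sl₂ relations at every site, and commutativity of generators at distinct sites. -/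
def GaudinSites {A : Type*} [Ring A] [Algebra ℂ A] {N : ℕ}
    (H Xp Xm : Fin N → A) : Prop :=
  (∀ a, H a * Xp a - Xp a * H a = (2 : ℂ) • Xp a) ∧
  (∀ a, Xp a * Xm a - Xm a * Xp a = H a) ∧
  (∀ a, H a * Xm a - Xm a * H a = (-2 : ℂ) • Xm a) ∧
  (∀ a b, a ≠ b → ∀ x ∈ ({H a, Xp a, Xm a} : Set A), ∀ y ∈ ({H b, Xp b, Xm b} : Set A),
    Commute x y)

/-- The ordered product `B⁽ᵏ⁾_M(μ₁,…,μ_M) = (X⁻(μ₁)+kξμ₁)⋯(X⁻(μ_M)+(M+k-1)ξμ_M)`. -/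
def Bop {A : Type*} [Ring A] [Algebra ℂ A] (Xm : ℂ → A) (ξ : ℂ) :
    ℕ → List ℂ → A
  | _, [] => 1
  | k, μ :: rest => (Xm μ + ((k : ℂ) * ξ * μ) • (1 : A)) * Bop Xm ξ (k + 1) rest

/-- The Bethe operator `β̂(λ; ν̄) = h(λ) + Σ_{ν∈ν̄} 2/(ν-λ)`. -/
def betaHat {A : Type*} [Ring A] [Algebra ℂ A] {N : ℕ} (z : Fin N → ℂ) (ξ : ℂ)
    (H Xp : Fin N → A) (l : ℂ) (νs : List ℂ) : A :=
  hCur z ξ H Xp l + ((νs.map fun ν => 2 / (ν - l)).sum) • (1 : A)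

set_option linter.unusedSectionVars false
set_option maxHeartbeats 1000000

section helpers
variable {A : Type*} [Ring A] [Algebra ℂ A] {N : ℕ}

lemma sum_comm_sub (F G : Fin N → A)
    (h : ∀ a b, a ≠ b → Commute (F a) (G b)) :
    (∑ a, F a) * (∑ a, G a) - (∑ a, G a) * (∑ a, F a)
      = ∑ a, (F a * G a - G a * F a) := by
  rw [Finset.sum_mul_sum, Finset.sum_mul_sum,
    Finset.sum_comm (f := fun a b => G a * F b), ← Finset.sum_sub_distrib]
  refine Finset.sum_congr rfl fun a _ => ?_
  rw [← Finset.sum_sub_distrib]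
  refine Finset.sum_eq_single a (fun b _ hb => ?_) (fun ha => absurd (Finset.mem_univ a) ha)
  rw [(h a b (Ne.symm hb)).eq, sub_self]

variable {H Xp Xm : Fin N → A} {z : Fin N → ℂ} {ξ : ℂ}

lemma site_comm_hX (hG : GaudinSites H Xp Xm) (a : Fin N) (c d e f : ℂ) :
    (c • H a + d • Xp a) * (e • Xm a - f • H a) -
      (e • Xm a - f • H a) * (c • H a + d • Xp a)
      = (-2*(c*e)) • Xm a + (d*e) • H a + (2*(d*f)) • Xp a := by
  have e1 : H a * Xp a = (2:ℂ) • Xp a + Xp a * H a := sub_eq_iff_eq_add.mp (hG.1 a)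
  have e2 : Xp a * Xm a = H a + Xm a * Xp a := sub_eq_iff_eq_add.mp (hG.2.1 a)
  have e3 : H a * Xm a = (-2:ℂ) • Xm a + Xm a * H a := sub_eq_iff_eq_add.mp (hG.2.2.1 a)
  simp only [mul_add, add_mul, mul_sub, sub_mul, smul_mul_assoc, mul_smul_comm, e1, e2, e3,
    smul_add, smul_sub, smul_smul]
  module

lemma site_comm_XX (hG : GaudinSites H Xp Xm) (a : Fin N) (e f e' f' : ℂ) :
    (e • Xm a - f • H a) * (e' • Xm a - f' • H a) -
      (e' • Xm a - f' • H a) * (e • Xm a - f • H a)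
      = (2*(e'*f - e*f')) • Xm a := by
  have e3 : H a * Xm a = (-2:ℂ) • Xm a + Xm a * H a := sub_eq_iff_eq_add.mp (hG.2.2.1 a)
  simp only [mul_sub, sub_mul, smul_mul_assoc, mul_smul_comm, e3, smul_add, smul_sub, smul_smul]
  module

lemma commute_FG (hab : ∀ a b : Fin N, a ≠ b → ∀ x ∈ ({H a, Xp a, Xm a} : Set A),
      ∀ y ∈ ({H b, Xp b, Xm b} : Set A), Commute x y)
    {a b : Fin N} (h : a ≠ b) (c d e f : ℂ) :
    Commute (c • H a + d • Xp a) (e • Xm b - f • H b) := by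
  have c1 : Commute (H a) (Xm b) := hab a b h _ (by simp) _ (by simp)
  have c2 : Commute (H a) (H b) := hab a b h _ (by simp) _ (by simp)
  have c3 : Commute (Xp a) (Xm b) := hab a b h _ (by simp) _ (by simp)
  have c4 : Commute (Xp a) (H b) := hab a b h _ (by simp) _ (by simp)
  exact ((((c1.smul_left c).smul_right e).sub_right ((c2.smul_left c).smul_right f)).add_left
    (((c3.smul_left d).smul_right e).sub_right ((c4.smul_left d).smul_right f)))

lemma hX_comm (hG : GaudinSites H Xp Xm) (l μ : ℂ) (hlm : l ≠ μ)
    (hl : ∀ a, l ≠ z a) (hm : ∀ a, μ ≠ z a) :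
    hCur z ξ H Xp l * XmCur z ξ H Xm μ - XmCur z ξ H Xm μ * hCur z ξ H Xp l
      = (2*(l-μ)⁻¹) • (XmCur z ξ H Xm l - XmCur z ξ H Xm μ) + (ξ*μ) • hCur z ξ H Xp μ := by
  have key := sum_comm_sub (fun a => (l - z a)⁻¹ • H a + (ξ * z a) • Xp a)
    (fun a => (μ - z a)⁻¹ • Xm a - (ξ / 2 * μ) • H a)
    (fun a b hab => commute_FG hG.2.2.2 hab _ _ _ _)
  unfold hCur XmCur
  rw [key, smul_sub, Finset.smul_sum, Finset.smul_sum, Finset.smul_sum,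
    ← Finset.sum_sub_distrib, ← Finset.sum_add_distrib]
  refine Finset.sum_congr rfl fun a _ => ?_
  have hlz : l - z a ≠ 0 := sub_ne_zero.mpr (hl a)
  have hmz : μ - z a ≠ 0 := sub_ne_zero.mpr (hm a)
  have hlm' : l - μ ≠ 0 := sub_ne_zero.mpr hlm
  rw [site_comm_hX hG]
  match_scalars
  · field_simp; ring
  · field_simp; ring
  · field_simp

lemma XX_comm (hG : GaudinSites H Xp Xm) (a b : ℂ) :
    XmCur z ξ H Xm a * XmCur z ξ H Xm b - XmCur z ξ H Xm b * XmCur z ξ H Xm a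
      = (ξ*a) • XmCur z ξ H Xm b - (ξ*b) • XmCur z ξ H Xm a := by
  have key := sum_comm_sub (fun i => (a - z i)⁻¹ • Xm i - (ξ / 2 * a) • H i)
    (fun i => (b - z i)⁻¹ • Xm i - (ξ / 2 * b) • H i)
    (fun i j hij => by
      have c1 : Commute (Xm i) (Xm j) := hG.2.2.2 i j hij _ (by simp) _ (by simp)
      have c2 : Commute (Xm i) (H j) := hG.2.2.2 i j hij _ (by simp) _ (by simp)
      have c3 : Commute (H i) (Xm j) := hG.2.2.2 i j hij _ (by simp) _ (by simp)
      have c4 : Commute (H i) (H j) := hG.2.2.2 i j hij _ (by simp) _ (by simp)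
      exact (((c1.smul_left _).smul_right _).sub_right ((c2.smul_left _).smul_right _)).sub_left
        (((c3.smul_left _).smul_right _).sub_right ((c4.smul_left _).smul_right _)))
  unfold XmCur
  rw [key, Finset.smul_sum, Finset.smul_sum, ← Finset.sum_sub_distrib]
  refine Finset.sum_congr rfl fun i _ => ?_
  rw [site_comm_XX hG]
  match_scalars <;> ring

lemma hY_comm (hG : GaudinSites H Xp Xm) (k : ℕ) (l μ : ℂ) (hlm : l ≠ μ)
    (hl : ∀ a, l ≠ z a) (hm : ∀ a, μ ≠ z a) :
    hCur z ξ H Xp l * (XmCur z ξ H Xm μ + ((k:ℂ) * ξ * μ) • (1:A))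
      = (XmCur z ξ H Xm μ + ((k:ℂ) * ξ * μ) • (1:A)) * hCur z ξ H Xp l
        + (2*(l-μ)⁻¹) • ((XmCur z ξ H Xm l + ((k:ℂ) * ξ * l) • (1:A))
            - (XmCur z ξ H Xm μ + ((k:ℂ) * ξ * μ) • (1:A)))
        + ξ • (μ • hCur z ξ H Xp μ - (2*(k:ℂ)) • (1:A)) := by
  have E := hX_comm (ξ := ξ) (Xm := Xm) hG l μ hlm hl hm
  have E' : hCur z ξ H Xp l * XmCur z ξ H Xm μ
      = ((2*(l-μ)⁻¹) • (XmCur z ξ H Xm l - XmCur z ξ H Xm μ) + (ξ*μ) • hCur z ξ H Xp μ)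
        + XmCur z ξ H Xm μ * hCur z ξ H Xp l := sub_eq_iff_eq_add.mp E
  have hlm' : l - μ ≠ 0 := sub_ne_zero.mpr hlm
  rw [mul_add, add_mul, E', mul_smul_comm, mul_one, smul_mul_assoc, one_mul]
  match_scalars
  any_goals ring
  all_goals (field_simp; ring)

lemma swapY (hG : GaudinSites H Xp Xm) (κ : ℂ) (a b : ℂ) :
    (XmCur z ξ H Xm a + (κ * ξ * a) • (1:A)) * (XmCur z ξ H Xm b + ((κ+1) * ξ * b) • (1:A))
      = (XmCur z ξ H Xm b + (κ * ξ * b) • (1:A)) *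
          (XmCur z ξ H Xm a + ((κ+1) * ξ * a) • (1:A)) := by
  have E : XmCur z ξ H Xm a * XmCur z ξ H Xm b
      = ((ξ*a) • XmCur z ξ H Xm b - (ξ*b) • XmCur z ξ H Xm a) +
          XmCur z ξ H Xm b * XmCur z ξ H Xm a := sub_eq_iff_eq_add.mp (XX_comm (ξ := ξ) hG a b)
  simp only [mul_add, add_mul, mul_smul_comm, smul_mul_assoc, mul_one, one_mul, smul_smul, E]
  match_scalars <;> ring

lemma Bop_nil (X : ℂ → A) (k : ℕ) : Bop X ξ k [] = 1 := rfl

lemma Bop_cons (X : ℂ → A) (k : ℕ) (a : ℂ) (L : List ℂ) :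
    Bop X ξ k (a :: L) = (X a + ((k : ℂ) * ξ * a) • (1 : A)) * Bop X ξ (k + 1) L := rfl

lemma Bop_set (hG : GaudinSites H Xp Xm) :
    ∀ (L : List ℂ) (j : ℕ) (k : ℕ) (x : ℂ), j < L.length →
      Bop (XmCur z ξ H Xm) ξ k (L.set j x)
        = (XmCur z ξ H Xm x + ((k:ℂ) * ξ * x) • (1:A)) *
            Bop (XmCur z ξ H Xm) ξ (k + 1) (L.eraseIdx j)
  | [], j, k, x, h => absurd h (by simp)
  | a::L, 0, k, x, h => by simp [Bop_cons]
  | a::L, j+1, k, x, h => by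
    have ih := Bop_set hG L j (k+1) x (by simpa using h)
    rw [List.set_cons_succ, List.eraseIdx_cons_succ, Bop_cons, Bop_cons, ih, ← mul_assoc,
      ← mul_assoc]
    congr 1
    have := swapY (z := z) (H := H) (Xm := Xm) (ξ := ξ) hG (k : ℂ) a x
    push_cast
    exact this

lemma listSumMap (f : ℂ → ℂ) : ∀ L : List ℂ,
    (L.map f).sum = ∑ i : Fin L.length, f (L.get i)
  | [] => by simp
  | a::L => by
    rw [List.map_cons, List.sum_cons, listSumMap f L]
    simp only [List.length_cons, Fin.sum_univ_succ, List.get_eq_getElem, Fin.val_zero,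
      List.getElem_cons_zero, Fin.val_succ, List.getElem_cons_succ]

end helpers

/-- `h(λ)B⁽ᵏ⁾_M(μ̄) = B⁽ᵏ⁾_M(μ̄)h(λ)
+ 2Σᵢ (B⁽ᵏ⁾_M({λ}∪μ̄⁽ⁱ⁾) - B⁽ᵏ⁾_M(μ̄))/(λ-μᵢ)
+ ξΣᵢ B⁽ᵏ⁺¹⁾_{M-1}(μ̄⁽ⁱ⁾)(μᵢ β̂_M(μᵢ; μ̄⁽ⁱ⁾) - 2k)`. -/
theorem hCur_mul_Bop {A : Type*} [Ring A] [Algebra ℂ A] {N : ℕ} (z : Fin N → ℂ) (ξ : ℂ)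
    (H Xp Xm : Fin N → A) (hz : Function.Injective z) (hG : GaudinSites H Xp Xm)
    (k : ℕ) (l : ℂ) (μs : List ℂ)
    (hdist : (l :: μs).Nodup) (hsites : ∀ x ∈ l :: μs, x ∉ Set.range z) :
    hCur z ξ H Xp l * Bop (XmCur z ξ H Xm) ξ k μs =
      Bop (XmCur z ξ H Xm) ξ k μs * hCur z ξ H Xp l +
        ∑ i : Fin μs.length, (2 * (l - μs.get i)⁻¹) •
          (Bop (XmCur z ξ H Xm) ξ k (μs.set i l) - Bop (XmCur z ξ H Xm) ξ k μs) +
        ξ • ∑ i : Fin μs.length,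
          Bop (XmCur z ξ H Xm) ξ (k + 1) (μs.eraseIdx i) *
            (μs.get i • betaHat z ξ H Xp (μs.get i) (μs.eraseIdx i) -
              (2 * (k : ℂ)) • (1 : A)) := by
  induction μs generalizing k l with
  | nil => simp [Bop]
  | cons m t ih =>
    have hsl : ∀ a, l ≠ z a := fun a h => hsites l (by simp) ⟨a, h.symm⟩
    have hsm : ∀ a, m ≠ z a := fun a h => hsites m (by simp) ⟨a, h.symm⟩
    simp only [List.nodup_cons, List.mem_cons, not_or] at hdist
    obtain ⟨⟨hlm, hlt⟩, hmt, hnt⟩ := hdist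
    have hdl : (l :: t).Nodup := by simp [List.nodup_cons, hlt, hnt]
    have hdm : (m :: t).Nodup := by simp [List.nodup_cons, hmt, hnt]
    have hssl : ∀ x ∈ l :: t, x ∉ Set.range z := by
      intro x hx
      rcases List.mem_cons.mp hx with h | h
      · exact h ▸ hsites l (by simp)
      · exact hsites x (by simp [h])
    have hssm : ∀ x ∈ m :: t, x ∉ Set.range z := by
      intro x hx
      rcases List.mem_cons.mp hx with h | h
      · exact h ▸ hsites m (by simp)
      · exact hsites x (by simp [h])
    have IHl := ih (k+1) l hdl hssl
    have IHm := ih (k+1) m hdm hssm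
    have hYm := hY_comm (ξ := ξ) hG k l m hlm hsl hsm
    push_cast at IHl IHm
    simp only [List.get_eq_getElem] at IHl IHm ⊢
    simp only [List.length_cons, Fin.sum_univ_succ, Fin.val_zero, List.getElem_cons_zero,
      Fin.val_succ, List.getElem_cons_succ, List.set_cons_zero, List.set_cons_succ,
      List.eraseIdx_cons_zero, List.eraseIdx_cons_succ] at *
    rw [Bop_cons, ← mul_assoc, hYm]
    rw [add_mul, add_mul, mul_assoc, IHl]
    simp only [smul_mul_assoc, sub_mul, one_mul]
    rw [IHm]
    simp only [Bop_cons]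
    push_cast
    have hmg : ∀ x : Fin t.length, m - t[(x:ℕ)] ≠ 0 := by
      intro x
      refine sub_ne_zero.mpr fun h => hmt ?_
      rw [h]
      exact List.getElem_mem x.isLt
    have hset : ∀ x : Fin t.length,
        Bop (XmCur z ξ H Xm) ξ (k+1) (t.set (x:ℕ) m)
          = (XmCur z ξ H Xm m + (((k:ℂ)+1) * ξ * m) • (1:A)) *
              Bop (XmCur z ξ H Xm) ξ (k+1+1) (t.eraseIdx (x:ℕ)) := by
      intro x
      have := Bop_set (z := z) (ξ := ξ) (H := H) (Xp := Xp) (Xm := Xm) hG t (x:ℕ) (k+1) m x.isLt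
      push_cast at this
      exact this
    have hβc : ∀ ν : ℂ, ∀ L : List ℂ, betaHat z ξ H Xp ν (m :: L)
        = betaHat z ξ H Xp ν L + (2/(m - ν)) • (1:A) := by
      intro ν L
      unfold betaHat
      rw [List.map_cons, List.sum_cons, add_smul]
      abel
    have h1sum : ∑ x : Fin t.length, (2 * (l - t[(x:ℕ)])⁻¹) •
          ((XmCur z ξ H Xm m + ((k:ℂ) * ξ * m) • (1:A)) *
              Bop (XmCur z ξ H Xm) ξ (k+1) (t.set (x:ℕ) l) -
            (XmCur z ξ H Xm m + ((k:ℂ) * ξ * m) • (1:A)) * Bop (XmCur z ξ H Xm) ξ (k+1) t)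
        = (XmCur z ξ H Xm m + ((k:ℂ) * ξ * m) • (1:A)) *
            ∑ x : Fin t.length, (2 * (l - t[(x:ℕ)])⁻¹) •
              (Bop (XmCur z ξ H Xm) ξ (k+1) (t.set (x:ℕ) l) -
                Bop (XmCur z ξ H Xm) ξ (k+1) t) := by
      rw [Finset.mul_sum]
      exact Finset.sum_congr rfl fun x _ => by rw [mul_smul_comm, mul_sub]
    have h2sum : ∑ x : Fin t.length,
          (XmCur z ξ H Xm m + (((k:ℂ)+1) * ξ * m) • (1:A)) *
              Bop (XmCur z ξ H Xm) ξ (k+1+1) (t.eraseIdx (x:ℕ)) *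
            (t[(x:ℕ)] • betaHat z ξ H Xp t[(x:ℕ)] (m :: t.eraseIdx (x:ℕ)) -
              (2 * (k:ℂ)) • (1:A))
        = (XmCur z ξ H Xm m + (((k:ℂ)+1) * ξ * m) • (1:A)) *
            (∑ x : Fin t.length, Bop (XmCur z ξ H Xm) ξ (k+1+1) (t.eraseIdx (x:ℕ)) *
              (t[(x:ℕ)] • betaHat z ξ H Xp t[(x:ℕ)] (t.eraseIdx (x:ℕ)) -
                (2 * ((k:ℂ)+1)) • (1:A)))
          + ∑ x : Fin t.length, (2 * m * (m - t[(x:ℕ)])⁻¹) •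
              ((XmCur z ξ H Xm m + (((k:ℂ)+1) * ξ * m) • (1:A)) *
                Bop (XmCur z ξ H Xm) ξ (k+1+1) (t.eraseIdx (x:ℕ))) := by
      rw [Finset.mul_sum, ← Finset.sum_add_distrib]
      refine Finset.sum_congr rfl fun x _ => ?_
      have hin : t[(x:ℕ)] • (betaHat z ξ H Xp t[(x:ℕ)] (t.eraseIdx (x:ℕ)) +
              (2/(m - t[(x:ℕ)])) • (1:A)) - (2 * (k:ℂ)) • (1:A)
          = (t[(x:ℕ)] • betaHat z ξ H Xp t[(x:ℕ)] (t.eraseIdx (x:ℕ)) -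
              (2 * ((k:ℂ)+1)) • (1:A)) + (2 * m * (m - t[(x:ℕ)])⁻¹) • (1:A) := by
        have := hmg x
        match_scalars
        · ring
        · field_simp
          ring
      rw [hβc, hin, mul_assoc, mul_add, mul_add, mul_smul_comm, mul_smul_comm, mul_one]
    have hml : (t.map fun ν => 2/(ν - m)).sum = ∑ x : Fin t.length, 2/(t[(x:ℕ)] - m) := by
      rw [listSumMap]
      simp only [List.get_eq_getElem]
    have h0 : Bop (XmCur z ξ H Xm) ξ (k+1) t *
          (m • betaHat z ξ H Xp m t - (2 * (k:ℂ)) • (1:A))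
        = m • (Bop (XmCur z ξ H Xm) ξ (k+1) t * hCur z ξ H Xp m)
          + ∑ x : Fin t.length, (m * (2/(t[(x:ℕ)] - m))) • Bop (XmCur z ξ H Xm) ξ (k+1) t
          - (2 * (k:ℂ)) • Bop (XmCur z ξ H Xm) ξ (k+1) t := by
      unfold betaHat
      rw [hml, mul_sub, mul_smul_comm, mul_smul_comm, mul_add, mul_smul_comm, mul_one,
        smul_add, smul_smul]
      rw [Finset.mul_sum, Finset.sum_smul]
    have hT1 : (m:ℂ) • (∑ x : Fin t.length, (2 * (m - t[(x:ℕ)])⁻¹) •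
          (Bop (XmCur z ξ H Xm) ξ (k+1) (t.set (x:ℕ) m) - Bop (XmCur z ξ H Xm) ξ (k+1) t))
        = ∑ x : Fin t.length, (2 * m * (m - t[(x:ℕ)])⁻¹) •
            ((XmCur z ξ H Xm m + (((k:ℂ)+1) * ξ * m) • (1:A)) *
              Bop (XmCur z ξ H Xm) ξ (k+1+1) (t.eraseIdx (x:ℕ)))
          + ∑ x : Fin t.length, (m * (2/(t[(x:ℕ)] - m))) • Bop (XmCur z ξ H Xm) ξ (k+1) t := by
      rw [Finset.smul_sum, ← Finset.sum_add_distrib]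
      refine Finset.sum_congr rfl fun x _ => ?_
      rw [hset x]
      have h1 := hmg x
      have h2 : t[(x:ℕ)] - m ≠ 0 := fun h => h1 (by rw [← neg_sub] at h; simpa using neg_eq_zero.mpr h)
      match_scalars <;> (field_simp; try ring)
    have hYp : (XmCur z ξ H Xm m + (((k:ℂ)+1) * ξ * m) • (1:A))
        = (XmCur z ξ H Xm m + ((k:ℂ) * ξ * m) • (1:A)) + (ξ*m) • (1:A) := by
      rw [show ((k:ℂ)+1)*ξ*m = (k:ℂ)*ξ*m + ξ*m from by ring, add_smul, add_assoc]
    rw [h1sum, h2sum, h0]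
    simp only [mul_add, smul_add, mul_smul_comm, smul_smul]
    rw [hT1]
    simp only [hYp, add_mul, smul_mul_assoc, one_mul, mul_assoc, mul_add, smul_add]
    module


end
end

section
/- The commutation relation X⁺(λ)B⁽ᵏ⁾_M(μ̄) = B⁽ᵏ⁾_M(μ̄)X⁺(λ) - 2Σ_{i<j} B⁽ᵏ⁺¹⁾_{M-1}({λ}∪μ̄⁽ⁱʲ⁾)/((λ-μᵢ)(λ-μⱼ)) - Σᵢ B⁽ᵏ⁺¹⁾_{M-1}(μ̄⁽ⁱ⁾)[(β̂_M(λ;μ̄⁽ⁱ⁾) - β̂_M(μᵢ;μ̄⁽ⁱ⁾))/(λ-μᵢ) - ξμᵢX⁺(λ)] holds, where β̂_M(λ;ν̄) = h(λ) + Σ_{ν∈ν̄} 2/(ν-λ). -/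
noncomputable section

set_option linter.unusedSectionVars false
section
variable {A : Type*} [Ring A] [Algebra ℂ A] {N : ℕ} (z : Fin N → ℂ) (ξ : ℂ)
  (H Xp Xm : Fin N → A)

lemma sum_comm_sum (f g : Fin N → A) (hfg : ∀ a b, a ≠ b → Commute (f a) (g b)) :
    (∑ a, f a) * (∑ b, g b) - (∑ b, g b) * (∑ a, f a)
      = ∑ a, (f a * g a - g a * f a) := by
  rw [Finset.sum_mul_sum, Finset.sum_mul_sum]
  rw [Finset.sum_comm (s := Finset.univ) (t := Finset.univ) (f := fun i j => g i * f j)]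
  rw [← Finset.sum_sub_distrib]
  apply Finset.sum_congr rfl
  intro a _
  rw [← Finset.sum_sub_distrib]
  apply Finset.sum_eq_single a
  · intro b _ hb
    rw [(hfg a b (fun h => hb (h ▸ rfl))).eq, sub_self]
  · simp

section
variable (hG : GaudinSites H Xp Xm)
include hG

lemma commute_sites {a b : Fin N} (hab : a ≠ b) :
    Commute (H a) (H b) ∧ Commute (H a) (Xp b) ∧ Commute (H a) (Xm b) ∧
    Commute (Xp a) (H b) ∧ Commute (Xp a) (Xp b) ∧ Commute (Xp a) (Xm b) ∧
    Commute (Xm a) (H b) ∧ Commute (Xm a) (Xp b) ∧ Commute (Xm a) (Xm b) := by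
  have h := hG.2.2.2 a b hab
  refine ⟨h _ ?_ _ ?_, h _ ?_ _ ?_, h _ ?_ _ ?_, h _ ?_ _ ?_, h _ ?_ _ ?_, h _ ?_ _ ?_,
    h _ ?_ _ ?_, h _ ?_ _ ?_, h _ ?_ _ ?_⟩ <;> simp [Set.mem_insert_iff]

end

set_option linter.unusedSectionVars false

section
variable (hG : GaudinSites H Xp Xm)

lemma hsub (l μ : ℂ) :
    hCur z ξ H Xp μ - hCur z ξ H Xp l = ∑ a, ((μ - z a)⁻¹ - (l - z a)⁻¹) • H a := by
  unfold hCur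
  rw [← Finset.sum_sub_distrib]
  apply Finset.sum_congr rfl
  intro a _
  rw [sub_smul]
  abel

include hG

/-- R4: `[X⁺(l), X⁻(μ)] = (l-μ)⁻¹ • (h(μ)-h(l)) + (ξμ) • X⁺(l)`. -/
lemma comm_Xp_Xm (l μ : ℂ) (hl : ∀ a, l ≠ z a) (hμ : ∀ a, μ ≠ z a) (hlμ : l ≠ μ) :
    XpCur z Xp l * XmCur z ξ H Xm μ - XmCur z ξ H Xm μ * XpCur z Xp l
      = (l - μ)⁻¹ • (hCur z ξ H Xp μ - hCur z ξ H Xp l) + (ξ * μ) • XpCur z Xp l := by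
  unfold XpCur XmCur
  rw [sum_comm_sum]
  · rw [hsub z ξ H Xp l μ, Finset.smul_sum]
    rw [Finset.smul_sum, ← Finset.sum_add_distrib]
    apply Finset.sum_congr rfl
    intro a _
    have hpm : Xm a * Xp a = Xp a * Xm a - H a := by rw [← hG.2.1 a]; abel
    have hhp : Xp a * H a = H a * Xp a - (2:ℂ) • Xp a := by rw [← hG.1 a]; abel
    simp only [mul_sub, sub_mul, smul_mul_assoc, mul_smul_comm, smul_smul, smul_sub, smul_add,
      sub_smul]
    rw [hpm, hhp]
    have hza : l - z a ≠ 0 := sub_ne_zero.mpr (hl a)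
    have hzb : μ - z a ≠ 0 := sub_ne_zero.mpr (hμ a)
    have hlm : l - μ ≠ 0 := sub_ne_zero.mpr hlμ
    match_scalars <;> (field_simp; try ring)
  · intro a b hab
    obtain ⟨h1, h2, h3, h4, h5, h6, h7, h8, h9⟩ := commute_sites H Xp Xm hG hab
    exact (((h6.smul_right _).sub_right (h4.smul_right _)).smul_left _)

/-- R5: `[h(l), X⁻(μ)] = 2(l-μ)⁻¹ • (X⁻(l)-X⁻(μ)) + (ξμ) • h(μ)`. -/
lemma comm_h_Xm (l μ : ℂ) (hl : ∀ a, l ≠ z a) (hμ : ∀ a, μ ≠ z a) (hlμ : l ≠ μ) :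
    hCur z ξ H Xp l * XmCur z ξ H Xm μ - XmCur z ξ H Xm μ * hCur z ξ H Xp l
      = (2 * (l - μ)⁻¹) • (XmCur z ξ H Xm l - XmCur z ξ H Xm μ) + (ξ * μ) • hCur z ξ H Xp μ := by
  unfold hCur XmCur
  rw [sum_comm_sum]
  · rw [← Finset.sum_sub_distrib, Finset.smul_sum, Finset.smul_sum, ← Finset.sum_add_distrib]
    apply Finset.sum_congr rfl
    intro a _
    have hpm : Xm a * Xp a = Xp a * Xm a - H a := by rw [← hG.2.1 a]; abel
    have hhp : Xp a * H a = H a * Xp a - (2:ℂ) • Xp a := by rw [← hG.1 a]; abel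
    have hhm : Xm a * H a = H a * Xm a + (2:ℂ) • Xm a := by
      have h := hG.2.2.1 a
      have h2 : Xm a * H a = H a * Xm a - (-2:ℂ) • Xm a := by rw [← h]; abel
      rw [h2, neg_smul]
      abel
    simp only [mul_sub, sub_mul, mul_add, add_mul, smul_mul_assoc, mul_smul_comm, smul_smul,
      smul_sub, smul_add, sub_smul]
    rw [hpm, hhp, hhm]
    have hza : l - z a ≠ 0 := sub_ne_zero.mpr (hl a)
    have hzb : μ - z a ≠ 0 := sub_ne_zero.mpr (hμ a)
    have hlm : l - μ ≠ 0 := sub_ne_zero.mpr hlμ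
    match_scalars <;> (field_simp; try ring)
  · intro a b hab
    obtain ⟨h1, h2, h3, h4, h5, h6, h7, h8, h9⟩ := commute_sites H Xp Xm hG hab
    exact ((h3.smul_right _).sub_right (h1.smul_right _)).smul_left _ |>.add_left
      (((h6.smul_right _).sub_right (h4.smul_right _)).smul_left _)

/-- R6: `[X⁻(l), X⁻(μ)] = ξ(l • X⁻(μ) - μ • X⁻(l))`. -/
lemma comm_Xm_Xm (l μ : ℂ) :
    XmCur z ξ H Xm l * XmCur z ξ H Xm μ - XmCur z ξ H Xm μ * XmCur z ξ H Xm l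
      = (ξ * l) • XmCur z ξ H Xm μ - (ξ * μ) • XmCur z ξ H Xm l := by
  unfold XmCur
  rw [sum_comm_sum]
  · rw [Finset.smul_sum, Finset.smul_sum, ← Finset.sum_sub_distrib]
    apply Finset.sum_congr rfl
    intro a _
    have hhm : Xm a * H a = H a * Xm a + (2:ℂ) • Xm a := by
      have h := hG.2.2.1 a
      have h2 : Xm a * H a = H a * Xm a - (-2:ℂ) • Xm a := by rw [← h]; abel
      rw [h2, neg_smul]
      abel
    simp only [mul_sub, sub_mul, smul_mul_assoc, mul_smul_comm, smul_smul, smul_sub, smul_add,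
      sub_smul]
    rw [hhm]
    match_scalars <;> try ring
  · intro a b hab
    obtain ⟨h1, h2, h3, h4, h5, h6, h7, h8, h9⟩ := commute_sites H Xp Xm hG hab
    exact ((h9.smul_right _).sub_right (h7.smul_right _)).smul_left _ |>.sub_left
      (((h3.smul_right _).sub_right (h1.smul_right _)).smul_left _)

end

/-- The single factor `F_c(μ) = X⁻(μ) + cξμ`. -/
def Fop (c : ℕ) (μ : ℂ) : A := XmCur z ξ H Xm μ + ((c : ℂ) * ξ * μ) • (1 : A)

lemma Bop_cons_s14 (k : ℕ) (μ : ℂ) (rest : List ℂ) :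
    Bop (XmCur z ξ H Xm) ξ k (μ :: rest) = Fop z ξ H Xm k μ * Bop (XmCur z ξ H Xm) ξ (k + 1) rest := rfl

section
variable (hG : GaudinSites H Xp Xm)
include hG

lemma Fop_swap (k : ℕ) (a b : ℂ) :
    Fop z ξ H Xm k a * Fop z ξ H Xm (k + 1) b = Fop z ξ H Xm k b * Fop z ξ H Xm (k + 1) a := by
  have hc := comm_Xm_Xm z ξ H Xp Xm hG a b
  have hab : XmCur z ξ H Xm a * XmCur z ξ H Xm b
      = ((ξ * a) • XmCur z ξ H Xm b - (ξ * b) • XmCur z ξ H Xm a)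
        + XmCur z ξ H Xm b * XmCur z ξ H Xm a := sub_eq_iff_eq_add.mp hc
  unfold Fop
  simp only [mul_add, add_mul, smul_mul_assoc, mul_smul_comm, smul_smul, mul_one, one_mul,
    Nat.cast_add, Nat.cast_one]
  rw [hab]
  match_scalars <;> try ring

lemma Bop_swap (k : ℕ) (a b : ℂ) (xs : List ℂ) :
    Bop (XmCur z ξ H Xm) ξ k (a :: b :: xs) = Bop (XmCur z ξ H Xm) ξ k (b :: a :: xs) := by
  show Fop z ξ H Xm k a * (Fop z ξ H Xm (k+1) b * Bop _ ξ (k+2) xs)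
    = Fop z ξ H Xm k b * (Fop z ξ H Xm (k+1) a * Bop _ ξ (k+2) xs)
  rw [← mul_assoc, ← mul_assoc, Fop_swap z ξ H Xp Xm hG]

lemma Bop_set_s14 (x : ℂ) : ∀ (μs : List ℂ) (k i : ℕ), i < μs.length →
    Bop (XmCur z ξ H Xm) ξ k (μs.set i x) = Bop (XmCur z ξ H Xm) ξ k (x :: μs.eraseIdx i) := by
  intro μs
  induction μs with
  | nil => intro k i hi; simp at hi
  | cons m rest ih =>
    intro k i hi
    match i with
    | 0 => rfl
    | (i+1) =>
      have hi' : i < rest.length := by simpa using hi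
      have e1 : (m :: rest).set (i+1) x = m :: rest.set i x := rfl
      have e2 : (m :: rest).eraseIdx (i+1) = m :: rest.eraseIdx i := rfl
      rw [e1, e2, Bop_cons_s14, ih (k+1) i hi', ← Bop_cons_s14]
      exact Bop_swap z ξ H Xp Xm hG k m x _
end

section
variable (hG : GaudinSites H Xp Xm)
include hG

/-- `[h(l)-h(m), F_k(μ)] = 2(l-μ)⁻¹•(F_k(l)-F_k(μ)) - 2(m-μ)⁻¹•(F_k(m)-F_k(μ))`. -/
lemma Dcomm_F (l m μ : ℂ) (hl : ∀ a, l ≠ z a) (hm : ∀ a, m ≠ z a) (hμ : ∀ a, μ ≠ z a)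
    (hlμ : l ≠ μ) (hmμ : m ≠ μ) (k : ℕ) :
    (hCur z ξ H Xp l - hCur z ξ H Xp m) * Fop z ξ H Xm k μ
      - Fop z ξ H Xm k μ * (hCur z ξ H Xp l - hCur z ξ H Xp m)
    = (2 * (l - μ)⁻¹) • (Fop z ξ H Xm k l - Fop z ξ H Xm k μ)
      - (2 * (m - μ)⁻¹) • (Fop z ξ H Xm k m - Fop z ξ H Xm k μ) := by
  have c1 := comm_h_Xm z ξ H Xp Xm hG l μ hl hμ hlμ
  have c2 := comm_h_Xm z ξ H Xp Xm hG m μ hm hμ hmμ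
  have c1' : hCur z ξ H Xp l * XmCur z ξ H Xm μ
      = ((2 * (l - μ)⁻¹) • (XmCur z ξ H Xm l - XmCur z ξ H Xm μ) + (ξ * μ) • hCur z ξ H Xp μ)
        + XmCur z ξ H Xm μ * hCur z ξ H Xp l := sub_eq_iff_eq_add.mp c1
  have c2' : hCur z ξ H Xp m * XmCur z ξ H Xm μ
      = ((2 * (m - μ)⁻¹) • (XmCur z ξ H Xm m - XmCur z ξ H Xm μ) + (ξ * μ) • hCur z ξ H Xp μ)
        + XmCur z ξ H Xm μ * hCur z ξ H Xp m := sub_eq_iff_eq_add.mp c2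
  have hlm : l - μ ≠ 0 := sub_ne_zero.mpr hlμ
  have hmm : m - μ ≠ 0 := sub_ne_zero.mpr hmμ
  unfold Fop
  simp only [mul_add, add_mul, sub_mul, mul_sub, smul_mul_assoc, mul_smul_comm, mul_one, one_mul,
    smul_sub, smul_add, smul_smul]
  rw [c1', c2']
  match_scalars <;> (field_simp; try ring)

lemma D_mul_Bop (l m : ℂ) (hl : ∀ a, l ≠ z a) (hm : ∀ a, m ≠ z a) :
    ∀ (μs : List ℂ) (k : ℕ), (∀ μ ∈ μs, (∀ a, μ ≠ z a) ∧ l ≠ μ ∧ m ≠ μ) →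
    (hCur z ξ H Xp l - hCur z ξ H Xp m) * Bop (XmCur z ξ H Xm) ξ k μs
      = Bop (XmCur z ξ H Xm) ξ k μs * (hCur z ξ H Xp l - hCur z ξ H Xp m)
        + ∑ i : Fin μs.length, (2 * (l - μs.get i)⁻¹) •
            (Bop (XmCur z ξ H Xm) ξ k (μs.set i l) - Bop (XmCur z ξ H Xm) ξ k μs)
        - ∑ i : Fin μs.length, (2 * (m - μs.get i)⁻¹) •
            (Bop (XmCur z ξ H Xm) ξ k (μs.set i m) - Bop (XmCur z ξ H Xm) ξ k μs) := by
  intro μs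
  induction μs with
  | nil => intro k _; simp [Bop]
  | cons μ rest ih =>
    intro k hcond
    obtain ⟨hμz, hlμ, hmμ⟩ := hcond μ List.mem_cons_self
    have hcond' : ∀ ν ∈ rest, (∀ a, ν ≠ z a) ∧ l ≠ ν ∧ m ≠ ν :=
      fun ν hν => hcond ν (List.mem_cons_of_mem μ hν)
    have step : (hCur z ξ H Xp l - hCur z ξ H Xp m) * Bop (XmCur z ξ H Xm) ξ k (μ :: rest)
        = Fop z ξ H Xm k μ * ((hCur z ξ H Xp l - hCur z ξ H Xp m) * Bop (XmCur z ξ H Xm) ξ (k+1) rest)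
          + ((hCur z ξ H Xp l - hCur z ξ H Xp m) * Fop z ξ H Xm k μ
              - Fop z ξ H Xm k μ * (hCur z ξ H Xp l - hCur z ξ H Xp m)) * Bop (XmCur z ξ H Xm) ξ (k+1) rest := by
      rw [Bop_cons_s14]; noncomm_ring
    rw [step, ih (k+1) hcond', Dcomm_F z ξ H Xp Xm hG l m μ hl hm hμz hlμ hmμ k]
    have e1 : ∀ (x : ℂ), ((2 * (x - μ)⁻¹) • (Fop z ξ H Xm k x - Fop z ξ H Xm k μ)) * Bop (XmCur z ξ H Xm) ξ (k+1) rest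
        = (2 * (x - μ)⁻¹) • (Bop (XmCur z ξ H Xm) ξ k (x :: rest) - Bop (XmCur z ξ H Xm) ξ k (μ :: rest)) := by
      intro x
      rw [smul_mul_assoc, sub_mul, Bop_cons_s14, Bop_cons_s14]
    have e2 : ∀ (x : ℂ), Fop z ξ H Xm k μ *
          (∑ i : Fin rest.length, (2 * (x - rest.get i)⁻¹) •
            (Bop (XmCur z ξ H Xm) ξ (k+1) (rest.set i x) - Bop (XmCur z ξ H Xm) ξ (k+1) rest))
        = ∑ i : Fin rest.length, (2 * (x - rest.get i)⁻¹) •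
            (Bop (XmCur z ξ H Xm) ξ k (μ :: rest.set i x) - Bop (XmCur z ξ H Xm) ξ k (μ :: rest)) := by
      intro x
      rw [Finset.mul_sum]
      apply Finset.sum_congr rfl
      intro i _
      rw [mul_smul_comm, mul_sub, Bop_cons_s14, Bop_cons_s14]
    rw [mul_sub, mul_add, sub_mul, e1 l, e1 m, e2 l, e2 m, ← mul_assoc, ← Bop_cons_s14]
    conv_rhs => simp only [List.length_cons]
    rw [Fin.sum_univ_succ, Fin.sum_univ_succ]
    simp only [List.get_eq_getElem, List.length_cons, Fin.val_succ, Fin.val_zero,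
      List.getElem_cons_succ, List.getElem_cons_zero, List.set_cons_succ, List.set_cons_zero]
    abel
end

lemma Fop_succ (k : ℕ) (μ : ℂ) :
    Fop z ξ H Xm (k+1) μ = Fop z ξ H Xm k μ + (ξ * μ) • (1 : A) := by
  unfold Fop
  push_cast
  rw [add_mul, add_mul, one_mul, add_smul]
  abel

lemma list_map_sum (f : ℂ → ℂ) : ∀ (xs : List ℂ),
    (xs.map f).sum = ∑ i : Fin xs.length, f (xs.get i) := by
  intro xs
  induction xs with
  | nil => simp
  | cons x rest ih =>
    simp only [List.map_cons, List.sum_cons, List.length_cons, Fin.sum_univ_succ, ih,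
      List.get_eq_getElem, List.getElem_cons_zero, Fin.val_succ, List.getElem_cons_succ,
      Fin.val_zero]

lemma betaHat_cons (x m : ℂ) (w : List ℂ) :
    betaHat z ξ H Xp x (m :: w) = betaHat z ξ H Xp x w + (2 / (m - x)) • (1 : A) := by
  unfold betaHat
  rw [List.map_cons, List.sum_cons, add_smul]
  abel

section
variable (hG : GaudinSites H Xp Xm)
include hG

lemma comm_Xp_F (l μ : ℂ) (hl : ∀ a, l ≠ z a) (hμ : ∀ a, μ ≠ z a) (hlμ : l ≠ μ) (k : ℕ) :
    XpCur z Xp l * Fop z ξ H Xm k μ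
      = Fop z ξ H Xm k μ * XpCur z Xp l
        + ((l - μ)⁻¹ • (hCur z ξ H Xp μ - hCur z ξ H Xp l) + (ξ * μ) • XpCur z Xp l) := by
  have c := comm_Xp_Xm z ξ H Xp Xm hG l μ hl hμ hlμ
  have c' : XpCur z Xp l * XmCur z ξ H Xm μ
      = ((l - μ)⁻¹ • (hCur z ξ H Xp μ - hCur z ξ H Xp l) + (ξ * μ) • XpCur z Xp l)
        + XmCur z ξ H Xm μ * XpCur z Xp l := sub_eq_iff_eq_add.mp c
  unfold Fop
  rw [mul_add, add_mul, c', mul_smul_comm, smul_mul_assoc, mul_one, one_mul]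
  abel
end

section
variable (hG : GaudinSites H Xp Xm)
include hG

lemma star (l m : ℂ) (hl : ∀ a, l ≠ z a) (hm : ∀ a, m ≠ z a) (hlm : l ≠ m)
    (rest : List ℂ) (k : ℕ)
    (hcond : ∀ μ ∈ rest, (∀ a, μ ≠ z a) ∧ l ≠ μ ∧ m ≠ μ) :
    (l - m)⁻¹ • ((hCur z ξ H Xp m - hCur z ξ H Xp l) * Bop (XmCur z ξ H Xm) ξ (k+1) rest)
      = -((ξ * m) • (Bop (XmCur z ξ H Xm) ξ (k+1) rest * XpCur z Xp l))
        - (2:ℂ) • (∑ j : Fin rest.length, ((l - m) * (l - rest.get j))⁻¹ •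
            Bop (XmCur z ξ H Xm) ξ (k+1) (l :: rest.eraseIdx ↑j))
        - Bop (XmCur z ξ H Xm) ξ (k+1) rest *
            ((l - m)⁻¹ • (betaHat z ξ H Xp l rest - betaHat z ξ H Xp m rest)
              - (ξ * m) • XpCur z Xp l)
        - ∑ i : Fin rest.length, ((l - rest.get i)⁻¹ * (2/(m - l) - 2/(m - rest.get i))) •
            Bop (XmCur z ξ H Xm) ξ (k+1) (m :: rest.eraseIdx ↑i) := by
  have hD := D_mul_Bop z ξ H Xp Xm hG l m hl hm rest (k+1) hcond
  -- rewrite set → cons/eraseIdx within hD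
  have hset : ∀ (x : ℂ) (i : Fin rest.length),
      Bop (XmCur z ξ H Xm) ξ (k+1) (rest.set ↑i x)
        = Bop (XmCur z ξ H Xm) ξ (k+1) (x :: rest.eraseIdx ↑i) :=
    fun x i => Bop_set_s14 z ξ H Xp Xm hG x rest (k+1) ↑i i.isLt
  simp only [hset] at hD
  -- betaHat difference
  have hbd : betaHat z ξ H Xp l rest - betaHat z ξ H Xp m rest
      = (hCur z ξ H Xp l - hCur z ξ H Xp m)
        + ((rest.map fun ν => 2 / (ν - l)).sum - (rest.map fun ν => 2 / (ν - m)).sum) • (1:A) := by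
    unfold betaHat
    rw [sub_smul]
    abel
  rw [hbd]
  have hDm : (hCur z ξ H Xp m - hCur z ξ H Xp l) * Bop (XmCur z ξ H Xm) ξ (k+1) rest
      = -((hCur z ξ H Xp l - hCur z ξ H Xp m) * Bop (XmCur z ξ H Xm) ξ (k+1) rest) := by
    rw [← neg_mul, neg_sub]
  rw [hDm, hD]
  rw [list_map_sum, list_map_sum]
  simp only [mul_sub, mul_add, mul_smul_comm, mul_one, smul_sub, smul_add, smul_smul,
    Finset.smul_sum, Finset.sum_smul, ← Finset.sum_sub_distrib, Finset.mul_sum,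
    neg_add, neg_sub, smul_neg, neg_neg, ← Finset.sum_neg_distrib]
  have hsum : (∑ x : Fin rest.length,
        (((l - m)⁻¹ * (2 * (m - rest.get x)⁻¹)) • Bop (XmCur z ξ H Xm) ξ (k + 1) (m :: rest.eraseIdx ↑x) -
          ((l - m)⁻¹ * (2 * (m - rest.get x)⁻¹)) • Bop (XmCur z ξ H Xm) ξ (k + 1) rest))
      - (∑ x : Fin rest.length,
          (((l - m)⁻¹ * (2 * (l - rest.get x)⁻¹)) • Bop (XmCur z ξ H Xm) ξ (k + 1) (l :: rest.eraseIdx ↑x) -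
            ((l - m)⁻¹ * (2 * (l - rest.get x)⁻¹)) • Bop (XmCur z ξ H Xm) ξ (k + 1) rest))
      + (∑ x : Fin rest.length,
            (2 * ((l - m) * l - (l - m) * rest.get x)⁻¹) • Bop (XmCur z ξ H Xm) ξ (k + 1) (l :: rest.eraseIdx ↑x))
      + (∑ x : Fin rest.length,
              ((l - m)⁻¹ * (2 / (rest.get x - l)) - (l - m)⁻¹ * (2 / (rest.get x - m))) •
                Bop (XmCur z ξ H Xm) ξ (k + 1) rest)
      + (∑ x : Fin rest.length,
        ((l - rest.get x)⁻¹ * (2 / (m - l)) - (l - rest.get x)⁻¹ * (2 / (m - rest.get x))) •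
          Bop (XmCur z ξ H Xm) ξ (k + 1) (m :: rest.eraseIdx ↑x)) = 0 := by
    rw [← Finset.sum_sub_distrib, ← Finset.sum_add_distrib, ← Finset.sum_add_distrib,
      ← Finset.sum_add_distrib]
    apply Finset.sum_eq_zero
    intro i _
    obtain ⟨hiz, hli, hmi⟩ := hcond (rest.get i) (rest.get_mem i)
    have h1 : l - m ≠ 0 := sub_ne_zero.mpr hlm
    have h2 : l - rest.get i ≠ 0 := sub_ne_zero.mpr hli
    have h3 : m - rest.get i ≠ 0 := sub_ne_zero.mpr hmi
    have h1' : m - l ≠ 0 := sub_ne_zero.mpr (Ne.symm hlm)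
    have h2' : rest.get i - l ≠ 0 := sub_ne_zero.mpr (Ne.symm hli)
    have h3' : rest.get i - m ≠ 0 := sub_ne_zero.mpr (Ne.symm hmi)
    have h4 : (l - m) * l - (l - m) * rest.get i ≠ 0 := by
      have := mul_ne_zero h1 h2
      rwa [mul_sub] at this
    have q1 : l * m - l * rest.get i + (m * rest.get i - m^2) ≠ 0 := by
      have h := mul_ne_zero h1 h3
      intro hq; exact h (by linear_combination hq)
    have q2 : l * m + l * rest.get i + (-l^2 - m * rest.get i) ≠ 0 := by
      have h := mul_ne_zero h1 h2'
      intro hq; exact h (by linear_combination hq)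
    have q3 : l * m + (-(l * rest.get i) - m * rest.get i) + rest.get i^2 ≠ 0 := by
      have h := mul_ne_zero h2 h3
      intro hq; exact h (by linear_combination hq)
    simp only [List.get_eq_getElem] at q1 q2 q3 h2 h3 h2' h3' h4
    match_scalars <;> (field_simp; try ring)
  rw [← sub_eq_zero, ← hsum]
  abel
end

section
variable (hG : GaudinSites H Xp Xm)
include hG

theorem key (l : ℂ) (hl : ∀ a, l ≠ z a) :
    ∀ (μs : List ℂ) (k : ℕ), μs.Nodup → l ∉ μs → (∀ μ ∈ μs, ∀ a, μ ≠ z a) →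
    XpCur z Xp l * Bop (XmCur z ξ H Xm) ξ k μs =
      Bop (XmCur z ξ H Xm) ξ k μs * XpCur z Xp l -
        (2 : ℂ) • (∑ i : Fin μs.length, ∑ j : Fin μs.length,
          if i < j then
            ((l - μs.get i) * (l - μs.get j))⁻¹ •
              Bop (XmCur z ξ H Xm) ξ (k + 1) (l :: (μs.eraseIdx j).eraseIdx i)
          else 0) -
        ∑ i : Fin μs.length,
          Bop (XmCur z ξ H Xm) ξ (k + 1) (μs.eraseIdx i) *
            ((l - μs.get i)⁻¹ • (betaHat z ξ H Xp l (μs.eraseIdx i) -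
                betaHat z ξ H Xp (μs.get i) (μs.eraseIdx i)) -
              (ξ * μs.get i) • XpCur z Xp l) := by
  intro μs
  induction μs with
  | nil => intro k _ _ _; simp [Bop]
  | cons m rest ih =>
    intro k hnd hnm hsite
    have hmr : m ∉ rest := (List.nodup_cons.mp hnd).1
    have hndr : rest.Nodup := (List.nodup_cons.mp hnd).2
    have hlm : l ≠ m := fun h => hnm (h ▸ (List.mem_cons_self : m ∈ m :: rest))
    have hlr : l ∉ rest := fun h => hnm (List.mem_cons_of_mem m h)
    have hmz : ∀ a, m ≠ z a := hsite m List.mem_cons_self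
    have hsiter : ∀ μ ∈ rest, ∀ a, μ ≠ z a := fun μ hμ => hsite μ (List.mem_cons_of_mem m hμ)
    have hcond : ∀ μ ∈ rest, (∀ a, μ ≠ z a) ∧ l ≠ μ ∧ m ≠ μ := by
      intro μ hμ
      exact ⟨hsiter μ hμ, fun h => hlr (h ▸ hμ), fun h => hmr (h ▸ hμ)⟩
    have ihr := ih (k+1) hndr hlr hsiter
    have hexp : XpCur z Xp l * Bop (XmCur z ξ H Xm) ξ k (m :: rest)
        = Fop z ξ H Xm k m * (XpCur z Xp l * Bop (XmCur z ξ H Xm) ξ (k+1) rest)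
          + ((l - m)⁻¹ • ((hCur z ξ H Xp m - hCur z ξ H Xp l) * Bop (XmCur z ξ H Xm) ξ (k+1) rest)
            + (ξ * m) • (XpCur z Xp l * Bop (XmCur z ξ H Xm) ξ (k+1) rest)) := by
      rw [Bop_cons_s14, ← mul_assoc, comm_Xp_F z ξ H Xp Xm hG l m hl hmz hlm k, add_mul, add_mul,
        smul_mul_assoc, smul_mul_assoc, mul_assoc]
    rw [hexp, ihr, star z ξ H Xp Xm hG l m hl hmz hlm rest k hcond]
    have hpos : ∀ (j : Fin rest.length) (x : A),
        (if (0 : Fin (rest.length+1)) < j.succ then x else 0) = x :=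
      fun j x => if_pos (Fin.succ_pos j)
    have hswap : ∀ (c : ℂ) (w : List ℂ), c • Bop (XmCur z ξ H Xm) ξ (k+1) (l :: m :: w)
        = Fop z ξ H Xm k m * (c • Bop (XmCur z ξ H Xm) ξ (k+1+1) (l :: w))
          + (ξ * m) • (c • Bop (XmCur z ξ H Xm) ξ (k+1+1) (l :: w)) := by
      intro c w
      rw [Bop_swap z ξ H Xp Xm hG (k+1) l m w, Bop_cons_s14, Fop_succ, add_mul, smul_mul_assoc,
        one_mul, smul_add, mul_smul_comm, smul_smul, smul_smul, mul_comm c (ξ * m)]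
    have hsplit2 : (∑ i : Fin (m :: rest).length, ∑ j : Fin (m :: rest).length,
          if i < j then ((l - (m :: rest).get i) * (l - (m :: rest).get j))⁻¹ •
            Bop (XmCur z ξ H Xm) ξ (k + 1) (l :: ((m :: rest).eraseIdx ↑j).eraseIdx ↑i) else 0)
        = (∑ j : Fin rest.length, ((l - m) * (l - rest.get j))⁻¹ •
              Bop (XmCur z ξ H Xm) ξ (k + 1) (l :: rest.eraseIdx ↑j))
          + (Fop z ξ H Xm k m * (∑ i : Fin rest.length, ∑ j : Fin rest.length,
                if i < j then ((l - rest.get i) * (l - rest.get j))⁻¹ •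
                  Bop (XmCur z ξ H Xm) ξ (k + 1 + 1) (l :: (rest.eraseIdx ↑j).eraseIdx ↑i) else 0)
            + (ξ * m) • (∑ i : Fin rest.length, ∑ j : Fin rest.length,
                if i < j then ((l - rest.get i) * (l - rest.get j))⁻¹ •
                  Bop (XmCur z ξ H Xm) ξ (k + 1 + 1) (l :: (rest.eraseIdx ↑j).eraseIdx ↑i) else 0)) := by
      simp only [List.length_cons, Fin.sum_univ_succ, List.get_eq_getElem, Fin.val_succ,
        Fin.val_zero, List.getElem_cons_succ, List.getElem_cons_zero, List.eraseIdx_cons_succ,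
        List.eraseIdx_cons_zero, lt_self_iff_false, if_false, Fin.not_lt_zero,
        Fin.succ_lt_succ_iff, zero_add, add_zero, hpos]
      simp only [Finset.mul_sum, Finset.smul_sum, mul_ite, mul_zero, smul_ite, smul_zero,
        ← Finset.sum_add_distrib]
      apply Finset.sum_congr rfl
      intro i _
      congr 1
      apply Finset.sum_congr rfl
      intro j _
      split_ifs with h
      · exact hswap _ _
      · simp
    have per : ∀ (μ : ℂ) (w : List ℂ),
        Bop (XmCur z ξ H Xm) ξ (k+1) (m :: w) *
          ((l - μ)⁻¹ • (betaHat z ξ H Xp l (m :: w) - betaHat z ξ H Xp μ (m :: w)) - (ξ * μ) • XpCur z Xp l)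
        = Fop z ξ H Xm k m * (Bop (XmCur z ξ H Xm) ξ (k+1+1) w *
            ((l - μ)⁻¹ • (betaHat z ξ H Xp l w - betaHat z ξ H Xp μ w) - (ξ * μ) • XpCur z Xp l))
          + ((ξ * m) • (Bop (XmCur z ξ H Xm) ξ (k+1+1) w *
              ((l - μ)⁻¹ • (betaHat z ξ H Xp l w - betaHat z ξ H Xp μ w) - (ξ * μ) • XpCur z Xp l))
            + ((l - μ)⁻¹ * (2/(m - l) - 2/(m - μ))) • Bop (XmCur z ξ H Xm) ξ (k+1) (m :: w)) := by
      intro μ w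
      have hG1 : (l - μ)⁻¹ • (betaHat z ξ H Xp l (m :: w) - betaHat z ξ H Xp μ (m :: w)) - (ξ * μ) • XpCur z Xp l
          = ((l - μ)⁻¹ • (betaHat z ξ H Xp l w - betaHat z ξ H Xp μ w) - (ξ * μ) • XpCur z Xp l)
            + ((l - μ)⁻¹ * (2/(m - l) - 2/(m - μ))) • (1:A) := by
        rw [betaHat_cons, betaHat_cons]
        module
      rw [hG1, mul_add, mul_smul_comm, mul_one, Bop_cons_s14, Fop_succ]
      simp only [add_mul, smul_mul_assoc, one_mul, mul_assoc, smul_add, mul_smul_comm, smul_smul]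
      module
    have hsplitT : (∑ i : Fin (m :: rest).length,
          Bop (XmCur z ξ H Xm) ξ (k + 1) ((m :: rest).eraseIdx ↑i) *
            ((l - (m :: rest).get i)⁻¹ • (betaHat z ξ H Xp l ((m :: rest).eraseIdx ↑i) -
                betaHat z ξ H Xp ((m :: rest).get i) ((m :: rest).eraseIdx ↑i)) -
              (ξ * (m :: rest).get i) • XpCur z Xp l))
        = Bop (XmCur z ξ H Xm) ξ (k+1) rest *
            ((l - m)⁻¹ • (betaHat z ξ H Xp l rest - betaHat z ξ H Xp m rest) - (ξ * m) • XpCur z Xp l)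
          + (Fop z ξ H Xm k m * (∑ i : Fin rest.length, Bop (XmCur z ξ H Xm) ξ (k + 1 + 1) (rest.eraseIdx ↑i) *
                ((l - rest.get i)⁻¹ • (betaHat z ξ H Xp l (rest.eraseIdx ↑i) -
                    betaHat z ξ H Xp (rest.get i) (rest.eraseIdx ↑i)) - (ξ * rest.get i) • XpCur z Xp l))
            + ((ξ * m) • (∑ i : Fin rest.length, Bop (XmCur z ξ H Xm) ξ (k + 1 + 1) (rest.eraseIdx ↑i) *
                ((l - rest.get i)⁻¹ • (betaHat z ξ H Xp l (rest.eraseIdx ↑i) -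
                    betaHat z ξ H Xp (rest.get i) (rest.eraseIdx ↑i)) - (ξ * rest.get i) • XpCur z Xp l))
              + ∑ i : Fin rest.length, ((l - rest.get i)⁻¹ * (2/(m - l) - 2/(m - rest.get i))) •
                  Bop (XmCur z ξ H Xm) ξ (k+1) (m :: rest.eraseIdx ↑i))) := by
      simp only [List.length_cons, Fin.sum_univ_succ, List.get_eq_getElem, Fin.val_succ,
        Fin.val_zero, List.getElem_cons_succ, List.getElem_cons_zero, List.eraseIdx_cons_succ,
        List.eraseIdx_cons_zero]
      congr 1
      simp only [Finset.mul_sum, Finset.smul_sum, ← Finset.sum_add_distrib]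
      apply Finset.sum_congr rfl
      intro i _
      exact per _ _
    rw [hsplit2, hsplitT, Bop_cons_s14, mul_assoc]
    simp only [mul_sub, mul_add, smul_sub, smul_add, mul_smul_comm, smul_smul]
    module
end

end

/-- `X⁺(λ)B⁽ᵏ⁾_M(μ̄) = B⁽ᵏ⁾_M(μ̄)X⁺(λ)
- 2Σ_{i<j} B⁽ᵏ⁺¹⁾_{M-1}({λ}∪μ̄⁽ⁱʲ⁾)/((λ-μᵢ)(λ-μⱼ))
- Σᵢ B⁽ᵏ⁺¹⁾_{M-1}(μ̄⁽ⁱ⁾)[(β̂_M(λ;μ̄⁽ⁱ⁾) - β̂_M(μᵢ;μ̄⁽ⁱ⁾))/(λ-μᵢ) - ξμᵢX⁺(λ)]`. -/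
theorem XpCur_mul_Bop {A : Type*} [Ring A] [Algebra ℂ A] {N : ℕ} (z : Fin N → ℂ) (ξ : ℂ)
    (H Xp Xm : Fin N → A) (hz : Function.Injective z) (hG : GaudinSites H Xp Xm)
    (k : ℕ) (l : ℂ) (μs : List ℂ)
    (hdist : (l :: μs).Nodup) (hsites : ∀ x ∈ l :: μs, x ∉ Set.range z) :
    XpCur z Xp l * Bop (XmCur z ξ H Xm) ξ k μs =
      Bop (XmCur z ξ H Xm) ξ k μs * XpCur z Xp l -
        (2 : ℂ) • (∑ i : Fin μs.length, ∑ j : Fin μs.length,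
          if i < j then
            ((l - μs.get i) * (l - μs.get j))⁻¹ •
              Bop (XmCur z ξ H Xm) ξ (k + 1) (l :: (μs.eraseIdx j).eraseIdx i)
          else 0) -
        ∑ i : Fin μs.length,
          Bop (XmCur z ξ H Xm) ξ (k + 1) (μs.eraseIdx i) *
            ((l - μs.get i)⁻¹ • (betaHat z ξ H Xp l (μs.eraseIdx i) -
                betaHat z ξ H Xp (μs.get i) (μs.eraseIdx i)) -
              (ξ * μs.get i) • XpCur z Xp l) := by
  have hx : ∀ x ∈ l :: μs, ∀ a, x ≠ z a := fun x hxm a heq => hsites x hxm ⟨a, heq.symm⟩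
  exact key z ξ H Xp Xm hG l (hx l List.mem_cons_self) μs k
    (List.nodup_cons.mp hdist).2 (List.nodup_cons.mp hdist).1
    (fun μ hμ => hx μ (List.mem_cons_of_mem l hμ))

end
end
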